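/- The identity ∫_0^1 [ξ²/√(−log(1 − ξ²)) + √(−log(1 − ξ²))] dξ = 3·∫_0^1 ξ²·√(−log(1 − ξ²)) dξ holds, all three integrals being finite. -/

import Mathlib

/-!
With `φ ξ = √(−log (1 − ξ²))`, the function `ξ (1 − ξ²) φ ξ` has derivative
`ξ² / φ + φ − 3 ξ² φ` on `(0, 1)` and vanishes at both endpoints (at `1` because
`(1 − ξ²)² log (1 − ξ²) → 0`), so the identity is the fundamental theorem of calculus.
The integrals converge since `ξ ≤ φ ξ ≤ (1 − ξ)^(-1/2)` on `(0, 1)`.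
-/

open MeasureTheory Set

namespace CuspedSoliton

open Real

lemma le_neg_log_one_sub {t : ℝ} (ht : t < 1) : t ≤ -log (1 - t) := by
  linarith [log_le_sub_one_of_pos (sub_pos.2 ht)]

lemma neg_log_one_sub_le {t : ℝ} (ht : t < 1) : -log (1 - t) ≤ (1 - t)⁻¹ := by
  linarith [one_sub_inv_le_log_of_pos (sub_pos.2 ht)]

lemma neg_log_one_sub_pos {t : ℝ} (h0 : 0 < t) (h1 : t < 1) : 0 < -log (1 - t) :=
  h0.trans_le (le_neg_log_one_sub h1)

/-- By the first integral `u'² = −log (1 − u²)`, this is `|u'|` where the soliton takes the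
value `u = ξ`. -/
noncomputable def cuspSlope (ξ : ℝ) : ℝ := √(-log (1 - ξ ^ 2))

lemma cuspSlope_nonneg (ξ : ℝ) : 0 ≤ cuspSlope ξ := sqrt_nonneg _

lemma le_cuspSlope {ξ : ℝ} (h0 : 0 ≤ ξ) (h1 : ξ ^ 2 < 1) : ξ ≤ cuspSlope ξ :=
  calc ξ = √(ξ ^ 2) := (sqrt_sq h0).symm
    _ ≤ cuspSlope ξ := sqrt_le_sqrt (le_neg_log_one_sub h1)

lemma cuspSlope_le_rpow {ξ : ℝ} (h0 : 0 ≤ ξ) (h1 : ξ < 1) :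
    cuspSlope ξ ≤ (1 - ξ) ^ (-(1 / 2) : ℝ) := by
  have hξ : 0 < 1 - ξ := sub_pos.2 h1
  have hsq : ξ ^ 2 < 1 := by nlinarith
  calc cuspSlope ξ ≤ √((1 - ξ ^ 2)⁻¹) := sqrt_le_sqrt (neg_log_one_sub_le hsq)
    _ ≤ √((1 - ξ)⁻¹) := sqrt_le_sqrt (inv_anti₀ hξ (by nlinarith))
    _ = (1 - ξ) ^ (-(1 / 2) : ℝ) := by
      rw [sqrt_eq_rpow, ← rpow_neg_one, ← rpow_mul hξ.le]
      norm_num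

lemma measurable_cuspSlope : Measurable cuspSlope := by
  unfold cuspSlope; fun_prop

lemma integrableOn_cuspSlope : IntegrableOn cuspSlope (Ioo 0 1) := by
  have hbound : IntegrableOn (fun ξ : ℝ => (1 - ξ) ^ (-(1 / 2) : ℝ)) (Ioo 0 1) := by
    have h := (intervalIntegral.intervalIntegrable_rpow' (a := 0) (b := 1)
      (r := -(1 / 2)) (by norm_num)).comp_sub_left 1
    simp only [sub_self, sub_zero] at h
    exact (intervalIntegrable_iff_integrableOn_Ioo_of_le zero_le_one).1 h.symm
  refine hbound.mono' measurable_cuspSlope.aestronglyMeasurable ?_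
  filter_upwards [ae_restrict_mem measurableSet_Ioo] with ξ hξ
  rw [norm_of_nonneg (cuspSlope_nonneg ξ)]
  exact cuspSlope_le_rpow hξ.1.le hξ.2

lemma integrableOn_sq_mul_cuspSlope :
    IntegrableOn (fun ξ => ξ ^ 2 * cuspSlope ξ) (Ioo 0 1) := by
  refine integrableOn_cuspSlope.mono'
    ((measurable_id.pow_const 2).mul measurable_cuspSlope).aestronglyMeasurable ?_
  filter_upwards [ae_restrict_mem measurableSet_Ioo] with ξ ⟨h0, h1⟩
  rw [norm_of_nonneg (mul_nonneg (sq_nonneg ξ) (cuspSlope_nonneg ξ))]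
  exact mul_le_of_le_one_left (cuspSlope_nonneg ξ) (by nlinarith)

lemma integrableOn_sq_div_cuspSlope :
    IntegrableOn (fun ξ => ξ ^ 2 / cuspSlope ξ) (Ioo 0 1) := by
  refine (integrable_const 1).mono'
    ((measurable_id.pow_const 2).div measurable_cuspSlope).aestronglyMeasurable ?_
  filter_upwards [ae_restrict_mem measurableSet_Ioo] with ξ ⟨h0, h1⟩
  have hslope := le_cuspSlope h0.le (by nlinarith)
  rw [norm_of_nonneg (div_nonneg (sq_nonneg ξ) (cuspSlope_nonneg ξ)),
    div_le_one (h0.trans_le hslope)]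
  nlinarith

lemma hasDerivAt_cuspSlope {ξ : ℝ} (hξ : ξ ≠ 0) (h1 : ξ ^ 2 < 1) :
    HasDerivAt cuspSlope (ξ / ((1 - ξ ^ 2) * cuspSlope ξ)) ξ := by
  have hlog : HasDerivAt (fun ξ : ℝ => -log (1 - ξ ^ 2)) (2 * ξ / (1 - ξ ^ 2)) ξ :=
    (((hasDerivAt_pow 2 ξ).const_sub 1).log (sub_pos.2 h1).ne').neg.congr_deriv
      (by norm_num; ring)
  have hpos := neg_log_one_sub_pos (pow_two_pos_of_ne_zero hξ) h1
  refine (hlog.sqrt hpos.ne').congr_deriv ?_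
  have := (sub_pos.2 h1).ne'
  have := (sqrt_pos.2 hpos).ne'
  unfold cuspSlope
  field_simp

/-- In the soliton variable this is `u u' (1 − u²)`, whose `x`-derivative is
`u² + u'² − 3 u² u'²` by the equation `(1 − u²) u'' = u`. -/
noncomputable def pohozaevFlux (ξ : ℝ) : ℝ := ξ * (1 - ξ ^ 2) * cuspSlope ξ

lemma hasDerivAt_pohozaevFlux {ξ : ℝ} (hξ : ξ ≠ 0) (h1 : ξ ^ 2 < 1) :
    HasDerivAt pohozaevFlux
      (ξ ^ 2 / cuspSlope ξ + cuspSlope ξ - 3 * (ξ ^ 2 * cuspSlope ξ)) ξ := by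
  have hpoly : HasDerivAt (fun ξ : ℝ => ξ * (1 - ξ ^ 2)) (1 - 3 * ξ ^ 2) ξ :=
    ((hasDerivAt_id' ξ).mul ((hasDerivAt_pow 2 ξ).const_sub 1)).congr_deriv
      (by norm_num; ring)
  refine (hpoly.mul (hasDerivAt_cuspSlope hξ h1)).congr_deriv ?_
  have := (sub_pos.2 h1).ne'
  have := (sqrt_pos.2 (neg_log_one_sub_pos (pow_two_pos_of_ne_zero hξ) h1)).ne'
  unfold cuspSlope
  field_simp
  ring

lemma pohozaevFlux_eq_negMulLog {ξ : ℝ} (h : ξ ^ 2 ≤ 1) :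
    pohozaevFlux ξ = ξ * √((1 - ξ ^ 2) * negMulLog (1 - ξ ^ 2)) := by
  have hsq : (1 - ξ ^ 2) * negMulLog (1 - ξ ^ 2)
      = (1 - ξ ^ 2) * (1 - ξ ^ 2) * -log (1 - ξ ^ 2) := by
    rw [negMulLog]; ring
  rw [hsq, sqrt_mul (mul_self_nonneg _), sqrt_mul_self (sub_nonneg.2 h), pohozaevFlux,
    cuspSlope, mul_assoc]

lemma continuousOn_pohozaevFlux : ContinuousOn pohozaevFlux (Icc (-1) 1) := by
  refine (Continuous.continuousOn (by fun_prop)).congr fun ξ hξ => pohozaevFlux_eq_negMulLog ?_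
  exact (sq_le_one_iff_abs_le_one ξ).2 (abs_le.2 hξ)

lemma integral_pohozaev_eq_zero :
    ∫ ξ in (0 : ℝ)..1, (ξ ^ 2 / cuspSlope ξ + cuspSlope ξ - 3 * (ξ ^ 2 * cuspSlope ξ)) = 0 := by
  have hint : IntegrableOn
      (fun ξ => ξ ^ 2 / cuspSlope ξ + cuspSlope ξ - 3 * (ξ ^ 2 * cuspSlope ξ)) (Ioo 0 1) :=
    (integrableOn_sq_div_cuspSlope.add integrableOn_cuspSlope).sub
      (integrableOn_sq_mul_cuspSlope.const_mul 3)
  rw [intervalIntegral.integral_eq_sub_of_hasDerivAt_of_le zero_le_one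
    (continuousOn_pohozaevFlux.mono (Icc_subset_Icc_left (by norm_num)))
    (fun ξ hξ => hasDerivAt_pohozaevFlux hξ.1.ne' (by nlinarith [hξ.1, hξ.2]))
    ((intervalIntegrable_iff_integrableOn_Ioo_of_le zero_le_one).2 hint)]
  simp [pohozaevFlux]

end CuspedSoliton

open CuspedSoliton

theorem pohozaev_identity_cusped :
    IntegrableOn (fun ξ : ℝ => ξ ^ 2 / Real.sqrt (-Real.log (1 - ξ ^ 2))) (Ioo 0 1) ∧
    IntegrableOn (fun ξ : ℝ => Real.sqrt (-Real.log (1 - ξ ^ 2))) (Ioo 0 1) ∧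
    IntegrableOn (fun ξ : ℝ => ξ ^ 2 * Real.sqrt (-Real.log (1 - ξ ^ 2))) (Ioo 0 1) ∧
    (∫ ξ in (0 : ℝ)..1,
        (ξ ^ 2 / Real.sqrt (-Real.log (1 - ξ ^ 2)) + Real.sqrt (-Real.log (1 - ξ ^ 2)))) =
      3 * ∫ ξ in (0 : ℝ)..1, ξ ^ 2 * Real.sqrt (-Real.log (1 - ξ ^ 2)) := by
  have toInterval {f : ℝ → ℝ} (hf : IntegrableOn f (Ioo 0 1)) : IntervalIntegrable f volume 0 1 :=
    (intervalIntegrable_iff_integrableOn_Ioo_of_le zero_le_one).2 hf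
  refine ⟨integrableOn_sq_div_cuspSlope, integrableOn_cuspSlope, integrableOn_sq_mul_cuspSlope, ?_⟩
  have hsplit := intervalIntegral.integral_sub
    ((toInterval integrableOn_sq_div_cuspSlope).add (toInterval integrableOn_cuspSlope))
    ((toInterval integrableOn_sq_mul_cuspSlope).const_mul 3)
  rw [integral_pohozaev_eq_zero, intervalIntegral.integral_const_mul] at hsplit
  exact sub_eq_zero.1 hsplit.symm
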